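/- Let R be a commutative based ring and let S be a based subring of R. If basic elements Y₁, Y₂ of R satisfy Y₁Y₁* ∈ S and Y₂Y₂* ∈ S, then every basic element Y contained in Y₁Y₂ satisfies YY* ∈ S. Consequently, the ℤ-span of the set of basic elements Y with YY* ∈ S is itself a based subring of R (equal to the commutator S^co). -/

import Mathlib

/-!
Let `Z = Y₁Y₂` and `Z' = Y₂*Y₁*`. By commutativity `ZZ' = (Y₁Y₁*)(Y₂Y₂*)`, which lies in the based
subring `S`. Since `Z'` contains `Y*` with the same multiplicity as `Z` contains `Y`, and all
structure constants are nonnegative, `ZZ'` dominates a positive multiple of `YY*` coefficientwise;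
so every basic element contained in `YY*` is contained in `ZZ'`, hence lies in `S`.
-/

/-- A *based ring* (fusion ring). -/
structure BasedRing (ι R : Type*) [Fintype ι] [DecidableEq ι] [Ring R] where
  b : Module.Basis ι ℤ R
  unit : ι
  b_unit : b unit = 1
  star : ι → ι
  star_invol : ∀ i, star (star i) = i
  c_nonneg : ∀ i j k, 0 ≤ b.repr (b i * b j) k
  adj_right : ∀ i j k, b.repr (b i * b j) k = b.repr (b k * b (star j)) i
  adj_left : ∀ i j k, b.repr (b i * b j) k = b.repr (b (star i) * b k) j

namespace BasedRing

variable {ι R : Type*} [Fintype ι] [DecidableEq ι] [Ring R] (BR : BasedRing ι R)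

/-- `x` (with nonnegative coordinates) *contains* the basic element `k`. -/
def contains (x : R) (k : ι) : Prop := 0 < BR.b.repr x k

/-- The `ℤ`-span of a set of basic elements. -/
def spanOf (C : Set ι) : Submodule ℤ R := Submodule.span ℤ (BR.b '' C)

/-- `C ⊆ ι` indexes a *based subring* of `R`: it contains the unit, is closed
under the involution, and every basic element contained in a product of two of
its elements again lies in it. -/
def IsBasedSubring (C : Set ι) : Prop :=
  BR.unit ∈ C ∧ (∀ i ∈ C, BR.star i ∈ C) ∧
    ∀ i ∈ C, ∀ j ∈ C, ∀ k, BR.contains (BR.b i * BR.b j) k → k ∈ C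

theorem mem_spanOf_iff {C : Set ι} {x : R} :
    x ∈ BR.spanOf C ↔ ∀ m ∉ C, BR.b.repr x m = 0 := by
  rw [spanOf, BR.b.mem_span_image, Finsupp.support_subset_iff]

theorem basis_mem_spanOf {C : Set ι} {i : ι} (hi : i ∈ C) : BR.b i ∈ BR.spanOf C :=
  Submodule.subset_span (Set.mem_image_of_mem _ hi)

theorem star_unit : BR.star BR.unit = BR.unit := by
  have h := BR.adj_left BR.unit BR.unit BR.unit
  rw [BR.b_unit, one_mul, mul_one, ← BR.b_unit, BR.b.repr_self, BR.b.repr_self,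
    Finsupp.single_eq_same] at h
  by_contra hne
  rw [Finsupp.single_eq_of_ne (Ne.symm hne)] at h
  exact one_ne_zero h

theorem repr_mul_star_star (i j k : ι) :
    BR.b.repr (BR.b (BR.star j) * BR.b (BR.star i)) (BR.star k) =
      BR.b.repr (BR.b i * BR.b j) k := by
  rw [BR.adj_right i j k, BR.adj_left k (BR.star j) i, BR.adj_right (BR.star k) i (BR.star j)]

theorem repr_mul (x y : R) (m : ι) :
    BR.b.repr (x * y) m =
      ∑ i, ∑ j, BR.b.repr x i * BR.b.repr y j * BR.b.repr (BR.b i * BR.b j) m := by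
  conv_lhs => rw [← BR.b.sum_repr x, ← BR.b.sum_repr y, Finset.sum_mul_sum]
  simp only [smul_mul_smul_comm, map_sum, map_zsmul, Finsupp.coe_finsetSum,
    Finset.sum_apply, Finsupp.smul_apply, smul_eq_mul]

theorem repr_mul_basis_le_repr_mul {x y : R} (hx : ∀ i, 0 ≤ BR.b.repr x i)
    (hy : ∀ j, 0 ≤ BR.b.repr y j) (i j m : ι) :
    BR.b.repr x i * BR.b.repr y j * BR.b.repr (BR.b i * BR.b j) m ≤ BR.b.repr (x * y) m := by
  have hterm : ∀ i' j', 0 ≤ BR.b.repr x i' * BR.b.repr y j' * BR.b.repr (BR.b i' * BR.b j') m :=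
    fun i' j' => mul_nonneg (mul_nonneg (hx i') (hy j')) (BR.c_nonneg i' j' m)
  rw [BR.repr_mul x y]
  calc _ ≤ ∑ j', BR.b.repr x i * BR.b.repr y j' * BR.b.repr (BR.b i * BR.b j') m :=
        Finset.single_le_sum (fun j' _ => hterm i j') (Finset.mem_univ j)
    _ ≤ _ := Finset.single_le_sum (fun i' _ => Finset.sum_nonneg fun j' _ => hterm i' j')
        (Finset.mem_univ i)

variable {BR}

open scoped Pointwise in
theorem mul_mem_spanOf {C : Set ι} (hC : BR.IsBasedSubring C) {x y : R}
    (hx : x ∈ BR.spanOf C) (hy : y ∈ BR.spanOf C) : x * y ∈ BR.spanOf C := by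
  have hbasis : BR.b '' C * BR.b '' C ⊆ (BR.spanOf C : Set R) := by
    rintro _ ⟨_, ⟨i, hi, rfl⟩, _, ⟨j, hj, rfl⟩, rfl⟩
    refine BR.mem_spanOf_iff.mpr fun m hm => ?_
    by_contra hne
    exact hm (hC.2.2 i hi j hj m ((BR.c_nonneg i j m).lt_of_ne' hne))
  have hle : BR.spanOf C * BR.spanOf C ≤ BR.spanOf C := by
    rw [spanOf, Submodule.span_mul_span]
    exact Submodule.span_le.mpr hbasis
  exact hle (Submodule.mul_mem_mul hx hy)

theorem basis_mul_mem_of_contains {C : Set ι} {x y : R} (hx : ∀ i, 0 ≤ BR.b.repr x i)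
    (hy : ∀ j, 0 ≤ BR.b.repr y j) (hxy : x * y ∈ BR.spanOf C) {i j : ι}
    (hi : BR.contains x i) (hj : BR.contains y j) : BR.b i * BR.b j ∈ BR.spanOf C := by
  refine BR.mem_spanOf_iff.mpr fun m hm => le_antisymm ?_ (BR.c_nonneg i j m)
  have hle := BR.repr_mul_basis_le_repr_mul hx hy i j m
  rw [BR.mem_spanOf_iff.mp hxy m hm] at hle
  exact nonpos_of_mul_nonpos_right hle (mul_pos hi hj)

theorem mul_star_mem_of_contains_mul (hcomm : ∀ x y : R, x * y = y * x) {C : Set ι}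
    (hC : BR.IsBasedSubring C) {j₁ j₂ k : ι}
    (h₁ : BR.b j₁ * BR.b (BR.star j₁) ∈ BR.spanOf C)
    (h₂ : BR.b j₂ * BR.b (BR.star j₂) ∈ BR.spanOf C)
    (hk : BR.contains (BR.b j₁ * BR.b j₂) k) :
    BR.b k * BR.b (BR.star k) ∈ BR.spanOf C := by
  let _ : CommRing R := { ‹Ring R› with mul_comm := hcomm }
  have hprod : BR.b j₁ * BR.b j₂ * (BR.b (BR.star j₂) * BR.b (BR.star j₁)) ∈ BR.spanOf C := by
    rw [mul_comm (BR.b (BR.star j₂)), mul_mul_mul_comm]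
    exact mul_mem_spanOf hC h₁ h₂
  have hk' : BR.contains (BR.b (BR.star j₂) * BR.b (BR.star j₁)) (BR.star k) := by
    rw [contains, BR.repr_mul_star_star]
    exact hk
  exact basis_mul_mem_of_contains (BR.c_nonneg _ _) (BR.c_nonneg _ _) hprod hk hk'

end BasedRing

open BasedRing in
/-- Let `R` be a commutative based ring and `S` a based subring
(spanned by the set of basic elements indexed by `C`). If basic elements
`Y₁, Y₂` satisfy `Y₁Y₁* ∈ S` and `Y₂Y₂* ∈ S`, then every basic element `Y`
contained in `Y₁Y₂` satisfies `YY* ∈ S`. Consequently, the set of basic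
elements `Y` with `YY* ∈ S` indexes a based subring of `R` (whose `ℤ`-span is
the commutator `S^co`). -/
theorem commutator_is_based_subring {ι R : Type*} [Fintype ι] [DecidableEq ι]
    [Ring R] (BR : BasedRing ι R) (hcomm : ∀ x y : R, x * y = y * x)
    (C : Set ι) (hC : BR.IsBasedSubring C) :
    (∀ j₁ j₂, BR.b j₁ * BR.b (BR.star j₁) ∈ BR.spanOf C →
      BR.b j₂ * BR.b (BR.star j₂) ∈ BR.spanOf C →
      ∀ k, BR.contains (BR.b j₁ * BR.b j₂) k →
        BR.b k * BR.b (BR.star k) ∈ BR.spanOf C) ∧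
    BR.IsBasedSubring {j | BR.b j * BR.b (BR.star j) ∈ BR.spanOf C} := by
  refine ⟨fun j₁ j₂ h₁ h₂ k hk => mul_star_mem_of_contains_mul hcomm hC h₁ h₂ hk, ?_,
    fun i hi => ?_, fun i hi j hj k hk => mul_star_mem_of_contains_mul hcomm hC hi hj hk⟩
  · show BR.b BR.unit * BR.b (BR.star BR.unit) ∈ BR.spanOf C
    rw [BR.star_unit, BR.b_unit, one_mul, ← BR.b_unit]
    exact BR.basis_mem_spanOf hC.1
  · show BR.b (BR.star i) * BR.b (BR.star (BR.star i)) ∈ BR.spanOf C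
    rw [BR.star_invol, hcomm]
    exact hi
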